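/- arXiv:2404.09580 — 5 statements merged into one kernel-verified Lean document; each statement's English description precedes it below -/
import Mathlib

section
/- Let $I \subseteq \mathbb{R}$ be an interval and let $\mu, w : I \to (0,\infty)$ be weights in the Muckenhoupt class $A_2(I)$, i.e. $(\fint_J \mu)(\fint_J 1/\mu) \le C$ and $(\fint_J w)(\fint_J 1/w) \le C$ for all subintervals $J \subseteq I$. Then for every subinterval $J \subseteq I$, $\big(\int_J \mu\,dx\big)\big(\int_J \tfrac{1}{w}\,dx\big) \lesssim \big(\int_J \sqrt{\mu/w}\,dx\big)^2$, with implicit constant depending only on the $A_2$ constants of $\mu$ and $w$. -/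
/-!
Write `T = ∫_J √(μ/w)` and `U = ∫_J √(w/μ)`. Cauchy–Schwarz gives `|J|² ≤ T U` and
`U² ≤ (∫_J w)(∫_J 1/μ)`, hence `|J|⁴ ≤ T² (∫_J w)(∫_J 1/μ)`. Multiplying the two `A₂` conditions,
`(∫_J μ)(∫_J 1/μ)(∫_J w)(∫_J 1/w) ≤ Cμ Cw |J|⁴ ≤ Cμ Cw T² (∫_J 1/μ)(∫_J w)`, and cancelling
`(∫_J 1/μ)(∫_J w)` gives the claim with constant `Cμ Cw`.
-/

open MeasureTheory

variable {α : Type*} [MeasurableSpace α] {ν : Measure α}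

theorem integral_sqrt_mul_sq_le {f g : α → ℝ} (hf : Integrable f ν) (hg : Integrable g ν)
    (hf0 : 0 ≤ᵐ[ν] f) (hg0 : 0 ≤ᵐ[ν] g) :
    (∫ x, √(f x * g x) ∂ν) ^ 2 ≤ (∫ x, f x ∂ν) * ∫ x, g x ∂ν := by
  have memLp_sqrt : ∀ {h : α → ℝ}, Integrable h ν → 0 ≤ᵐ[ν] h →
      MemLp (fun x => √(h x)) (ENNReal.ofReal 2) ν := fun {h} hh hh0 => by
    rw [ENNReal.ofReal_ofNat, memLp_two_iff_integrable_sq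
      (Real.continuous_sqrt.comp_aestronglyMeasurable hh.aestronglyMeasurable)]
    exact hh.congr (by filter_upwards [hh0] with x hx using (Real.sq_sqrt hx).symm)
  have integral_sqrt_rpow : ∀ {h : α → ℝ}, 0 ≤ᵐ[ν] h →
      ∫ x, √(h x) ^ (2 : ℝ) ∂ν = ∫ x, h x ∂ν := fun hh0 =>
    integral_congr_ae <| by
      filter_upwards [hh0] with x hx using by rw [Real.rpow_two, Real.sq_sqrt hx]
  have holder := integral_mul_le_Lp_mul_Lq_of_nonneg Real.HolderConjugate.two_two
    (.of_forall fun x => Real.sqrt_nonneg (f x)) (.of_forall fun x => Real.sqrt_nonneg (g x))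
    (memLp_sqrt hf hf0) (memLp_sqrt hg hg0)
  rw [integral_sqrt_rpow hf0, integral_sqrt_rpow hg0, ← Real.sqrt_eq_rpow,
    ← Real.sqrt_eq_rpow] at holder
  calc (∫ x, √(f x * g x) ∂ν) ^ 2 = (∫ x, √(f x) * √(g x) ∂ν) ^ 2 := by
        congr 1
        exact integral_congr_ae <| by
          filter_upwards [hf0] with x hx using Real.sqrt_mul hx (g x)
    _ ≤ (√(∫ x, f x ∂ν) * √(∫ x, g x ∂ν)) ^ 2 :=
        pow_le_pow_left₀ (integral_nonneg fun x => by positivity) holder 2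
    _ = (∫ x, f x ∂ν) * ∫ x, g x ∂ν := by
        rw [mul_pow, Real.sq_sqrt (integral_nonneg_of_ae hf0),
          Real.sq_sqrt (integral_nonneg_of_ae hg0)]

theorem MeasureTheory.Integrable.sqrt_mul {f g : α → ℝ} (hf : Integrable f ν)
    (hg : Integrable g ν) : Integrable (fun x => √(f x * g x)) ν := by
  refine ((hf.abs.add hg.abs).div_const 2).mono'
    (Real.continuous_sqrt.comp_aestronglyMeasurable (hf.1.mul hg.1)) (.of_forall fun x => ?_)
  rw [Real.norm_of_nonneg (Real.sqrt_nonneg _)]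
  calc √(f x * g x) ≤ √(|f x| * |g x|) :=
        Real.sqrt_le_sqrt (abs_mul (f x) (g x) ▸ le_abs_self _)
    _ = √|f x| * √|g x| := Real.sqrt_mul (abs_nonneg _) _
    _ ≤ (|f x| + |g x|) / 2 := by
        nlinarith [two_mul_le_add_sq √|f x| √|g x|, Real.sq_sqrt (abs_nonneg (f x)),
          Real.sq_sqrt (abs_nonneg (g x))]

theorem measureReal_univ_sq_le_integral_mul_integral_inv {h : α → ℝ} (hh : Integrable h ν)
    (hh_inv : Integrable (fun x => (h x)⁻¹) ν) (hpos : ∀ᵐ x ∂ν, 0 < h x) :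
    ν.real Set.univ ^ 2 ≤ (∫ x, h x ∂ν) * ∫ x, (h x)⁻¹ ∂ν := by
  have cs := integral_sqrt_mul_sq_le hh hh_inv (hpos.mono fun x hx => hx.le)
    (hpos.mono fun x hx => (inv_pos.2 hx).le)
  have one : ∫ x, √(h x * (h x)⁻¹) ∂ν = ∫ _, (1 : ℝ) ∂ν := integral_congr_ae <| by
    filter_upwards [hpos] with x hx using by rw [mul_inv_cancel₀ hx.ne', Real.sqrt_one]
  rwa [one, integral_const, smul_eq_mul, mul_one] at cs

theorem integral_mul_integral_inv_le_of_A₂ {μ w : α → ℝ} {Cμ Cw : ℝ} (hν : 0 < ν.real Set.univ)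
    (hμ : ∀ᵐ x ∂ν, 0 < μ x) (hw : ∀ᵐ x ∂ν, 0 < w x) (hμ_int : Integrable μ ν)
    (hμ_inv_int : Integrable (fun x => (μ x)⁻¹) ν) (hw_int : Integrable w ν)
    (hw_inv_int : Integrable (fun x => (w x)⁻¹) ν)
    (hAμ : (∫ x, μ x ∂ν) * (∫ x, (μ x)⁻¹ ∂ν) ≤ Cμ * ν.real Set.univ ^ 2)
    (hAw : (∫ x, w x ∂ν) * (∫ x, (w x)⁻¹ ∂ν) ≤ Cw * ν.real Set.univ ^ 2) :
    (∫ x, μ x ∂ν) * (∫ x, (w x)⁻¹ ∂ν) ≤ Cμ * Cw * (∫ x, √(μ x / w x) ∂ν) ^ 2 := by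
  set m := ν.real Set.univ
  set P := ∫ x, μ x ∂ν
  set Q := ∫ x, (μ x)⁻¹ ∂ν
  set R := ∫ x, w x ∂ν
  set S := ∫ x, (w x)⁻¹ ∂ν
  set T := ∫ x, √(μ x / w x) ∂ν
  set U := ∫ x, √(w x * (μ x)⁻¹) ∂ν
  have hP : 0 ≤ P := integral_nonneg_of_ae (hμ.mono fun x hx => hx.le)
  have hQ : 0 ≤ Q := integral_nonneg_of_ae (hμ.mono fun x hx => (inv_pos.2 hx).le)
  have hR : 0 ≤ R := integral_nonneg_of_ae (hw.mono fun x hx => hx.le)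
  have hS : 0 ≤ S := integral_nonneg_of_ae (hw.mono fun x hx => (inv_pos.2 hx).le)
  have hT : 0 ≤ T := integral_nonneg fun x => Real.sqrt_nonneg _
  have hm_le_TU : m ^ 2 ≤ T * U := by
    have inv_eq : ∀ x, (√(μ x / w x))⁻¹ = √(w x * (μ x)⁻¹) := fun x => by
      rw [← Real.sqrt_inv, inv_div, div_eq_mul_inv]
    have hpos : ∀ᵐ x ∂ν, 0 < √(μ x / w x) := by
      filter_upwards [hμ, hw] with x hμx hwx using Real.sqrt_pos.2 (div_pos hμx hwx)
    simpa only [inv_eq] using measureReal_univ_sq_le_integral_mul_integral_inv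
      (h := fun x => √(μ x / w x)) (hμ_int.sqrt_mul hw_inv_int)
      (by simpa only [inv_eq] using hw_int.sqrt_mul hμ_inv_int) hpos
  have hU_sq_le : U ^ 2 ≤ R * Q :=
    integral_sqrt_mul_sq_le hw_int hμ_inv_int (hw.mono fun x hx => hx.le)
      (hμ.mono fun x hx => (inv_pos.2 hx).le)
  have hQR : 0 < Q * R := by
    have hU_pos : 0 < U := pos_of_mul_pos_right ((pow_pos hν 2).trans_le hm_le_TU) hT
    nlinarith
  have hCμ : 0 ≤ Cμ := nonneg_of_mul_nonneg_left ((mul_nonneg hP hQ).trans hAμ) (by positivity)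
  have hCw : 0 ≤ Cw := nonneg_of_mul_nonneg_left ((mul_nonneg hR hS).trans hAw) (by positivity)
  refine le_of_mul_le_mul_right ?_ hQR
  calc P * S * (Q * R) = (P * Q) * (R * S) := by ring
    _ ≤ (Cμ * m ^ 2) * (Cw * m ^ 2) := mul_le_mul hAμ hAw (mul_nonneg hR hS) (by positivity)
    _ = Cμ * Cw * (m ^ 2) ^ 2 := by ring
    _ ≤ Cμ * Cw * (T ^ 2 * U ^ 2) := by rw [← mul_pow]; gcongr
    _ ≤ Cμ * Cw * (T ^ 2 * (Q * R)) := by gcongr; linarith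
    _ = Cμ * Cw * T ^ 2 * (Q * R) := by ring

/-- If `μ, w` are `A₂` weights on an interval `I ⊆ ℝ` (with constants `Cμ, Cw`),
then `(∫_J μ)(∫_J 1/w) ≲ (∫_J √(μ/w))²` for all subintervals `J ⊆ I`, with implicit constant
depending only on the `A₂` constants. -/
theorem stmt_0 (Cμ Cw : ℝ) :
    ∃ C : ℝ, ∀ (I : Set ℝ) (μ w : ℝ → ℝ),
      (∀ x ∈ I, 0 < μ x) → (∀ x ∈ I, 0 < w x) →
      (∀ a b : ℝ, a ≤ b → Set.Icc a b ⊆ I →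
        IntervalIntegrable μ volume a b ∧ IntervalIntegrable (fun x => (μ x)⁻¹) volume a b ∧
        IntervalIntegrable w volume a b ∧ IntervalIntegrable (fun x => (w x)⁻¹) volume a b) →
      (∀ a b : ℝ, a ≤ b → Set.Icc a b ⊆ I →
        (∫ x in a..b, μ x) * (∫ x in a..b, (μ x)⁻¹) ≤ Cμ * (b - a) ^ 2) →
      (∀ a b : ℝ, a ≤ b → Set.Icc a b ⊆ I →
        (∫ x in a..b, w x) * (∫ x in a..b, (w x)⁻¹) ≤ Cw * (b - a) ^ 2) →
      ∀ a b : ℝ, a ≤ b → Set.Icc a b ⊆ I →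
        (∫ x in a..b, μ x) * (∫ x in a..b, (w x)⁻¹) ≤
          C * (∫ x in a..b, Real.sqrt (μ x / w x)) ^ 2 := by
  refine ⟨Cμ * Cw, fun I μ w hμ hw hint hAμ hAw a b hab hJ => ?_⟩
  obtain rfl | hlt := hab.eq_or_lt
  · simp
  obtain ⟨hμ_int, hμ_inv_int, hw_int, hw_inv_int⟩ := hint a b hab hJ
  have hJ' : ∀ᵐ x ∂volume.restrict (Set.Ioc a b), x ∈ I :=
    (ae_restrict_mem measurableSet_Ioc).mono fun x hx => hJ (Set.Ioc_subset_Icc_self hx)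
  have hlen : (volume.restrict (Set.Ioc a b)).real Set.univ = b - a := by
    rw [measureReal_restrict_apply_univ, Real.volume_real_Ioc_of_le hab]
  simp only [intervalIntegral.integral_of_le hab]
  refine integral_mul_integral_inv_le_of_A₂ (hlen ▸ sub_pos.2 hlt)
    (hJ'.mono fun x hx => hμ x hx) (hJ'.mono fun x hx => hw x hx) hμ_int.1 hμ_inv_int.1
    hw_int.1 hw_inv_int.1 ?_ ?_
  · simpa only [hlen, intervalIntegral.integral_of_le hab] using hAμ a b hab hJ
  · simpa only [hlen, intervalIntegral.integral_of_le hab] using hAw a b hab hJ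
end

section
/- Let $\mu, w$ be smooth positive weights on $I \subseteq \mathbb{R}$, $\rho' = \sqrt{\mu/w}$, $\nu\circ\rho = \sqrt{\mu w}$. For smooth functions $v_1, v_2$ on $M = \rho(I)$, the intertwining identities hold: $\partial_x(v_1\circ\rho) = \rho'\,(\partial_y v_1)\circ\rho$ and $\frac{1}{\mu}\partial_x\big(w\,\rho'\,(v_2\circ\rho)\big) = \Big(\frac{1}{\nu}\partial_y(\nu v_2)\Big)\circ\rho$. Consequently, writing $D = \begin{bmatrix} 0 & -(1/\mu)\partial_x w \\ \partial_x & 0\end{bmatrix}$ and $D_M = \begin{bmatrix} 0 & -(1/\nu)\partial_y \nu \\ \partial_y & 0\end{bmatrix}$, and $T$ the pullback $(v_1,v_2)\mapsto(v_1\circ\rho, (v_2\circ\rho)\rho')$, one has $T D_M = D T$ on smooth pairs. -/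
/-!
Both identities are the chain rule for `ρ`. For the second, `w ρ' = √(μ w) = ν ∘ ρ` on the open
set `I`, so near `x` the differentiated function is `(ν v₂) ∘ ρ`; the remaining factor `ρ' / μ`
equals `1 / (w ρ') = 1 / (ν ∘ ρ)` because `w ρ'² = μ`.
-/

open Filter Topology

lemma deriv_comp_eq_ofReal_mul {v : ℝ → ℂ} {ρ : ℝ → ℝ} {r x : ℝ}
    (hv : DifferentiableAt ℝ v (ρ x)) (hρ : HasDerivAt ρ r x) :
    deriv (fun t => v (ρ t)) x = (r : ℂ) * deriv v (ρ x) := by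
  rw [← Complex.real_smul]
  exact (hv.hasDerivAt.scomp x hρ).deriv

lemma Real.mul_sqrt_div_eq_sqrt_mul {a b : ℝ} (hb : 0 ≤ b) : b * √(a / b) = √(a * b) := by
  rcases hb.eq_or_lt with rfl | hb
  · simp
  rw [← Real.sqrt_sq hb.le, ← Real.sqrt_mul (sq_nonneg b), Real.sqrt_sq hb.le]
  congr 1
  field_simp

lemma Real.sqrt_div_div_eq_one_div_mul_sqrt_div {a b : ℝ} (ha : 0 < a) (hb : 0 < b) :
    √(a / b) / a = 1 / (b * √(a / b)) := by
  have hs : 0 < √(a / b) := Real.sqrt_pos.2 (div_pos ha hb)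
  field_simp
  rw [Real.sq_sqrt (div_pos ha hb).le]
  field_simp

theorem stmt_3_general (I : Set ℝ) (hI : IsOpen I) (μ w ν ρ : ℝ → ℝ)
    (hμ : ∀ x ∈ I, 0 < μ x) (hw : ∀ x ∈ I, 0 < w x)
    (hρ : ∀ x ∈ I, HasDerivAt ρ (Real.sqrt (μ x / w x)) x)
    (hν : ∀ x ∈ I, ν (ρ x) = Real.sqrt (μ x * w x))
    (v₁ v₂ : ℝ → ℂ)
    (hv₁ : Differentiable ℝ v₁)
    (hνv₂ : Differentiable ℝ (fun y => (ν y : ℂ) * v₂ y)) :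
    ∀ x ∈ I,
      deriv (fun t => v₁ (ρ t)) x = (Real.sqrt (μ x / w x) : ℂ) * deriv v₁ (ρ x) ∧
      (1 / (μ x : ℂ)) *
          deriv (fun t => ((w t * Real.sqrt (μ t / w t) : ℝ) : ℂ) * v₂ (ρ t)) x =
        (1 / (ν (ρ x) : ℂ)) * deriv (fun y => (ν y : ℂ) * v₂ y) (ρ x) := by
  intro x hx
  have hνρ : ∀ t ∈ I, ν (ρ t) = w t * √(μ t / w t) := fun t ht => by
    rw [hν t ht, Real.mul_sqrt_div_eq_sqrt_mul (hw t ht).le]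
  refine ⟨deriv_comp_eq_ofReal_mul (hv₁ _) (hρ x hx), ?_⟩
  have hlocal : (fun t => ((w t * √(μ t / w t) : ℝ) : ℂ) * v₂ (ρ t))
      =ᶠ[𝓝 x] fun t => (ν (ρ t) : ℂ) * v₂ (ρ t) := by
    filter_upwards [hI.mem_nhds hx] with t ht
    rw [hνρ t ht]
  rw [hlocal.deriv_eq, deriv_comp_eq_ofReal_mul (hνv₂ _) (hρ x hx), ← mul_assoc, hνρ x hx,
    one_div_mul_eq_div, ← Complex.ofReal_div,
    Real.sqrt_div_div_eq_one_div_mul_sqrt_div (hμ x hx) (hw x hx), Complex.ofReal_div,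
    Complex.ofReal_one]

/-- Intertwining identities for the rubber-band change of variables.
With `ρ' = √(μ/w)` and `ν ∘ ρ = √(μw)` on an open interval `I`, for differentiable
`v₁, v₂` (and `y ↦ ν(y)v₂(y)` differentiable) one has
`∂ₓ(v₁∘ρ) = ρ'·(∂_y v₁)∘ρ` and `(1/μ)∂ₓ(w·ρ'·(v₂∘ρ)) = ((1/ν)∂_y(ν v₂))∘ρ`,
i.e. `T D_M = D T` on smooth pairs. -/
theorem stmt_3 (I : Set ℝ) (hI : IsOpen I) (μ w ν ρ : ℝ → ℝ)
    (hμ : ∀ x ∈ I, 0 < μ x) (hw : ∀ x ∈ I, 0 < w x)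
    (hρ : ∀ x ∈ I, HasDerivAt ρ (Real.sqrt (μ x / w x)) x)
    (hν : ∀ x ∈ I, ν (ρ x) = Real.sqrt (μ x * w x))
    (v₁ v₂ : ℝ → ℂ)
    (hv₁ : Differentiable ℝ v₁) (hv₂ : Differentiable ℝ v₂)
    (hνv₂ : Differentiable ℝ (fun y => (ν y : ℂ) * v₂ y)) :
    ∀ x ∈ I,
      deriv (fun t => v₁ (ρ t)) x = (Real.sqrt (μ x / w x) : ℂ) * deriv v₁ (ρ x) ∧
      (1 / (μ x : ℂ)) *
          deriv (fun t => ((w t * Real.sqrt (μ t / w t) : ℝ) : ℂ) * v₂ (ρ t)) x =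
        (1 / (ν (ρ x) : ℂ)) * deriv (fun y => (ν y : ℂ) * v₂ y) (ρ x) :=
  stmt_3_general I hI μ w ν ρ hμ hw hρ hν v₁ v₂ hv₁ hνv₂
end

section
/- Let $W(x) = R(x) \,\mathrm{diag}(1, 1+2r)\, R(x)^{-1}$ where $R(x)$ is the rotation matrix by angle $x$ and $r \ge 0$. Then $\Big\|\Big(\fint_0^{\pi} W(x)\,dx\Big)^{1/2}\Big(\fint_0^{\pi} W^{-1}(x)\,dx\Big)^{1/2}\Big\|_{\mathrm{op}}^2 \to \infty$ as $r \to \infty$, even though for each fixed $x_0$ the constant matrix $W(x_0)$ has matrix $A_2$ constant equal to $1$. -/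
open MeasureTheory Filter

attribute [local instance] Matrix.normedAddCommGroup Matrix.normedSpace

/-- The rotation matrix by angle `x`. -/
noncomputable def rotM (x : ℝ) : Matrix (Fin 2) (Fin 2) ℝ :=
  !![Real.cos x, -Real.sin x; Real.sin x, Real.cos x]

/-- The matrix weight `W(x) = R(x) diag(1, 1+2r) R(x)⁻¹`. -/
noncomputable def Wmat (r x : ℝ) : Matrix (Fin 2) (Fin 2) ℝ :=
  rotM x * Matrix.diagonal ![1, 1 + 2 * r] * (rotM x)⁻¹

/-!
Both averages are scalar: conjugating `diag(a, b)` by `R(x)` and averaging over a half period gives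
`((a + b) / 2) I`, since `cos²` and `sin²` both average to `1/2` and `sin · cos` to `0`. Hence
`⨍ W = (1 + r) I`, `⨍ W⁻¹ = (1 + r) / (1 + 2r) I`, their square roots are scalar too, and the
quantity is `(1 + r)² / (1 + 2r) ≥ (1 + r) / 2`. For a fixed `x₀` the positive square root of
`W(x₀)⁻¹` is the inverse of that of `W(x₀)`, by uniqueness of positive square roots.
-/

open Real

namespace Matrix

variable {n : Type*} [Fintype n] [DecidableEq n]

section
open scoped ComplexOrder
variable {𝕜 : Type*} [RCLike 𝕜]

open scoped MatrixOrder in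
theorem PosSemidef.eq_of_mul_self_eq {A B : Matrix n n 𝕜} (hA : A.PosSemidef) (hB : B.PosSemidef)
    (h : A * A = B * B) : A = B :=
  (CFC.sq_eq_sq_iff A B hA.nonneg hB.nonneg).mp (by rw [sq, sq, h])

theorem PosSemidef.mul_eq_one_of_mul_self_eq_inv {S T : Matrix n n 𝕜} (hS : S.PosSemidef)
    (hT : T.PosSemidef) (hdet : IsUnit (S * S).det) (h : T * T = (S * S)⁻¹) : S * T = 1 := by
  have hSdet : IsUnit S.det := by
    rw [det_mul] at hdet
    exact isUnit_of_mul_isUnit_left hdet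
  have hTS : T = S⁻¹ := hT.eq_of_mul_self_eq hS.inv (by rw [h, mul_inv_rev])
  rw [hTS, mul_nonsing_inv _ hSdet]

end

theorem PosSemidef.eq_sqrt_smul_one {A : Matrix n n ℝ} {a : ℝ} (ha : 0 ≤ a)
    (hA : A.PosSemidef) (hAa : A * A = a • 1) : A = √a • 1 :=
  hA.eq_of_mul_self_eq (PosSemidef.one.smul (sqrt_nonneg a)) <| by
    rw [hAa, smul_mul_smul_comm, one_mul, mul_self_sqrt ha]

theorem sq_norm_toEuclideanCLM_mul_of_mul_self_eq_smul_one [Nonempty n]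
    {S T : Matrix n n ℝ} {c d : ℝ} (hc : 0 ≤ c) (hd : 0 ≤ d)
    (hS : S.PosSemidef) (hT : T.PosSemidef) (hSc : S * S = c • 1) (hTd : T * T = d • 1) :
    ‖toEuclideanCLM (𝕜 := ℝ) (S * T)‖ ^ 2 = c * d := by
  rw [hS.eq_sqrt_smul_one hc hSc, hT.eq_sqrt_smul_one hd hTd, smul_mul_smul_comm, one_mul,
    map_smul, map_one, norm_smul, norm_one, mul_one, norm_mul, mul_pow, Real.norm_eq_abs,
    Real.norm_eq_abs, sq_abs, sq_abs, sq_sqrt hc, sq_sqrt hd]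

end Matrix

open Matrix

theorem rotM_add (x y : ℝ) : rotM (x + y) = rotM x * rotM y := by
  rw [rotM, rotM, rotM, mul_fin_two, cos_add, sin_add]
  ext i j; fin_cases i <;> fin_cases j <;> simp <;> ring

theorem rotM_zero : rotM 0 = 1 := by
  rw [rotM, one_fin_two]; simp

theorem rotM_inv (x : ℝ) : (rotM x)⁻¹ = rotM (-x) :=
  inv_eq_right_inv (by rw [← rotM_add, add_neg_cancel, rotM_zero])

noncomputable def rotConj (a b x : ℝ) : Matrix (Fin 2) (Fin 2) ℝ :=
  rotM x * diagonal ![a, b] * (rotM x)⁻¹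

theorem rotConj_mul_rotConj (a b a' b' x : ℝ) :
    rotConj a b x * rotConj a' b' x = rotConj (a * a') (b * b') x := by
  have hR : (rotM x)⁻¹ * rotM x = 1 := by rw [rotM_inv, ← rotM_add, neg_add_cancel, rotM_zero]
  simp only [rotConj, Matrix.mul_assoc]
  rw [← Matrix.mul_assoc (rotM x)⁻¹, hR, Matrix.one_mul, ← Matrix.mul_assoc (diagonal _),
    diagonal_mul_diagonal]
  congr 3
  ext i; fin_cases i <;> rfl

theorem rotConj_one_one (x : ℝ) : rotConj 1 1 x = 1 := by
  rw [rotConj, rotM_inv, show ![(1 : ℝ), 1] = 1 by ext i; fin_cases i <;> rfl, Pi.one_def,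
    diagonal_one, Matrix.mul_one, ← rotM_add, add_neg_cancel, rotM_zero]

theorem rotConj_mul_rotConj_inv {a b : ℝ} (ha : a ≠ 0) (hb : b ≠ 0) (x : ℝ) :
    rotConj a b x * rotConj a⁻¹ b⁻¹ x = 1 := by
  rw [rotConj_mul_rotConj, mul_inv_cancel₀ ha, mul_inv_cancel₀ hb, rotConj_one_one]

theorem isUnit_det_rotConj {a b : ℝ} (ha : a ≠ 0) (hb : b ≠ 0) (x : ℝ) :
    IsUnit (rotConj a b x).det :=
  isUnit_det_of_right_inverse (rotConj_mul_rotConj_inv ha hb x)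

theorem inv_rotConj {a b : ℝ} (ha : a ≠ 0) (hb : b ≠ 0) (x : ℝ) :
    (rotConj a b x)⁻¹ = rotConj a⁻¹ b⁻¹ x :=
  inv_eq_right_inv (rotConj_mul_rotConj_inv ha hb x)

theorem rotConj_eq (a b x : ℝ) : rotConj a b x =
    cos x ^ 2 • diagonal ![a, b] + sin x ^ 2 • diagonal ![b, a] +
      (sin x * cos x) • !![0, a - b; a - b, 0] := by
  rw [rotConj, rotM_inv, rotM, rotM, cos_neg, sin_neg, diagonal_fin_two, diagonal_fin_two,
    mul_fin_two, mul_fin_two]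
  ext i j; fin_cases i <;> fin_cases j <;> simp <;> ring

-- The topology of `Matrix` is the product topology, which is not reducibly the one induced by
-- `Matrix.normedAddCommGroup`, so instance search does not find this `ENorm` structure by itself.
noncomputable local instance : ENormedAddMonoid (Matrix (Fin 2) (Fin 2) ℝ) :=
  NormedAddGroup.toENormedAddMonoid

theorem integral_rotConj (a b : ℝ) :
    ∫ x in (0 : ℝ)..π, rotConj a b x = (π * ((a + b) / 2)) • 1 := by
  have hint {f : ℝ → ℝ} (hf : Continuous f) (A : Matrix (Fin 2) (Fin 2) ℝ) :
      IntervalIntegrable (fun x => f x • A) volume 0 π :=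
    (hf.smul continuous_const).intervalIntegrable _ _
  have hc := hint (f := fun x => cos x ^ 2) (by fun_prop) (diagonal ![a, b])
  have hs := hint (f := fun x => sin x ^ 2) (by fun_prop) (diagonal ![b, a])
  have hsc := hint (f := fun x => sin x * cos x) (by fun_prop) !![0, a - b; a - b, 0]
  simp only [rotConj_eq]
  rw [intervalIntegral.integral_add (hc.add hs) hsc, intervalIntegral.integral_add hc hs,
    intervalIntegral.integral_smul_const, intervalIntegral.integral_smul_const,
    intervalIntegral.integral_smul_const, integral_cos_sq, integral_sin_sq,
    integral_sin_mul_cos₁]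
  ext i j; fin_cases i <;> fin_cases j <;> simp <;> ring

theorem average_rotConj (a b : ℝ) :
    π⁻¹ • ∫ x in (0 : ℝ)..π, rotConj a b x = ((a + b) / 2) • 1 := by
  rw [integral_rotConj, smul_smul, inv_mul_cancel_left₀ pi_ne_zero]

theorem Wmat_eq_rotConj (r x : ℝ) : Wmat r x = rotConj 1 (1 + 2 * r) x := rfl

theorem inv_Wmat {r : ℝ} (hr : 0 ≤ r) (x : ℝ) :
    (Wmat r x)⁻¹ = rotConj 1 (1 + 2 * r)⁻¹ x := by
  rw [Wmat_eq_rotConj, inv_rotConj one_ne_zero (by positivity), inv_one]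

/-- For `W(x) = R(x) diag(1, 1+2r) R(x)⁻¹`, the matrix `A₂` quantity
`‖(⨍₀^π W)^{1/2} (⨍₀^π W⁻¹)^{1/2}‖_op²` tends to `∞` as `r → ∞`, even though each
constant matrix `W(x₀)` has matrix `A₂` constant equal to `1`. -/
theorem stmt_7 :
    (∀ S T : ℝ → Matrix (Fin 2) (Fin 2) ℝ,
      (∀ r : ℝ, 0 ≤ r → (S r).PosSemidef ∧
        S r * S r = (Real.pi)⁻¹ • ∫ x in (0 : ℝ)..Real.pi, Wmat r x) →
      (∀ r : ℝ, 0 ≤ r → (T r).PosSemidef ∧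
        T r * T r = (Real.pi)⁻¹ • ∫ x in (0 : ℝ)..Real.pi, (Wmat r x)⁻¹) →
      Tendsto (fun r => ‖Matrix.toEuclideanCLM (𝕜 := ℝ) (S r * T r)‖ ^ 2) atTop atTop) ∧
    (∀ r x₀ : ℝ, 0 ≤ r → ∀ S T : Matrix (Fin 2) (Fin 2) ℝ,
      S.PosSemidef → S * S = Wmat r x₀ → T.PosSemidef → T * T = (Wmat r x₀)⁻¹ →
      ‖Matrix.toEuclideanCLM (𝕜 := ℝ) (S * T)‖ ^ 2 = 1) := by
  constructor
  · intro S T hS hT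
    have hnorm (r : ℝ) (hr : 0 ≤ r) : ‖toEuclideanCLM (𝕜 := ℝ) (S r * T r)‖ ^ 2 =
        ((1 + (1 + 2 * r)) / 2) * ((1 + (1 + 2 * r)⁻¹) / 2) := by
      refine sq_norm_toEuclideanCLM_mul_of_mul_self_eq_smul_one (by positivity) (by positivity)
        (hS r hr).1 (hT r hr).1 ?_ ?_
      · simp only [(hS r hr).2, Wmat_eq_rotConj, average_rotConj]
      · simp only [(hT r hr).2, inv_Wmat hr, average_rotConj]
    have hlower : Tendsto (fun r : ℝ => (1 + r) / 2) atTop atTop :=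
      (tendsto_atTop_add_const_left _ 1 tendsto_id).atTop_div_const two_pos
    refine tendsto_atTop_mono' atTop ?_ hlower
    filter_upwards [eventually_ge_atTop 0] with r hr
    have : 0 ≤ (1 + 2 * r)⁻¹ := by positivity
    rw [hnorm r hr]
    nlinarith
  · intro r x₀ hr S T hS hSW hT hTW
    have hW : IsUnit (S * S).det := hSW ▸ isUnit_det_rotConj one_ne_zero (by positivity) x₀
    rw [hS.mul_eq_one_of_mul_self_eq_inv hT hW (hSW ▸ hTW), map_one, norm_one, one_pow]
end

section
/- Let $\mathcal{I}$ be the block involution $\mathcal{I}\begin{bmatrix} a & b \\ c & d \end{bmatrix} = \begin{bmatrix} a^{-1} & -a^{-1}b \\ ca^{-1} & d - ca^{-1}b \end{bmatrix}$. For scalars $v_1, v_2 \ne 0$ and invertible matrices $W_1, W_2$, the identity $\mathcal{I}\Big(\begin{bmatrix} v_1 & 0\\ 0 & W_1\end{bmatrix} A \begin{bmatrix} v_2 & 0\\ 0 & W_2\end{bmatrix}\Big) = \begin{bmatrix} v_2^{-1} & 0\\ 0 & W_1\end{bmatrix} \mathcal{I}(A) \begin{bmatrix} v_1^{-1} & 0\\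 0 & W_2\end{bmatrix}$ holds whenever $A = \begin{bmatrix} a & b \\ c & d\end{bmatrix}$ has $a$ invertible. -/
/-! The weights act blockwise: the upper-left block becomes `v₁ a v₂`, whose inverse is
`v₁⁻¹ v₂⁻¹ a⁻¹` because scalars commute with all blocks, and the Schur complement
`d - c a⁻¹ b` is simply conjugated into `W₁ (d - c a⁻¹ b) W₂`. -/

open Matrix

/-- The block involution `𝓘 [a b; c d] = [a⁻¹  -a⁻¹b; ca⁻¹  d - ca⁻¹b]`. -/
noncomputable def blkI {n : ℕ} (M : Matrix (Unit ⊕ Fin n) (Unit ⊕ Fin n) ℂ) :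
    Matrix (Unit ⊕ Fin n) (Unit ⊕ Fin n) ℂ :=
  Matrix.fromBlocks (M.toBlocks₁₁)⁻¹ (-((M.toBlocks₁₁)⁻¹ * M.toBlocks₁₂))
    (M.toBlocks₂₁ * (M.toBlocks₁₁)⁻¹)
    (M.toBlocks₂₂ - M.toBlocks₂₁ * (M.toBlocks₁₁)⁻¹ * M.toBlocks₁₂)

namespace Matrix

/-- Both sides vanish when `k = 0` or `A` is singular, by the junk value `A⁻¹ = 0`. -/
theorem inv_smul₀ {n K : Type*} [Fintype n] [DecidableEq n] [Field K]
    (k : K) (A : Matrix n n K) : (k • A)⁻¹ = k⁻¹ • A⁻¹ := by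
  rcases eq_or_ne k 0 with rfl | hk
  · simp
  by_cases hA : IsUnit A.det
  · simpa [Units.smul_def] using inv_smul' A (Units.mk0 k hk) hA
  · have hkA : ¬IsUnit (k • A).det := by
      simpa [det_smul, hk] using hA
    rw [nonsing_inv_apply_not_isUnit _ hA, nonsing_inv_apply_not_isUnit _ hkA, smul_zero]

theorem fromBlocks_diag_mul_fromBlocks_mul_fromBlocks_diag {l m n o α : Type*}
    [Fintype l] [Fintype m] [Fintype n] [Fintype o] [Semiring α]
    (D₁ : Matrix l l α) (W₁ : Matrix m m α) (D₂ : Matrix n n α) (W₂ : Matrix o o α)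
    (a : Matrix l n α) (b : Matrix l o α) (c : Matrix m n α) (d : Matrix m o α) :
    fromBlocks D₁ 0 0 W₁ * fromBlocks a b c d * fromBlocks D₂ 0 0 W₂ =
      fromBlocks (D₁ * a * D₂) (D₁ * b * W₂) (W₁ * c * D₂) (W₁ * d * W₂) := by
  simp [fromBlocks_multiply]

end Matrix

theorem blkI_fromBlocks {n : ℕ} (a : Matrix Unit Unit ℂ) (b : Matrix Unit (Fin n) ℂ)
    (c : Matrix (Fin n) Unit ℂ) (d : Matrix (Fin n) (Fin n) ℂ) :
    blkI (fromBlocks a b c d) =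
      fromBlocks a⁻¹ (-(a⁻¹ * b)) (c * a⁻¹) (d - c * a⁻¹ * b) := by
  simp only [blkI, toBlocks_fromBlocks₁₁, toBlocks_fromBlocks₁₂, toBlocks_fromBlocks₂₁,
    toBlocks_fromBlocks₂₂]

theorem stmt_11_general {n : ℕ} (M : Matrix (Unit ⊕ Fin n) (Unit ⊕ Fin n) ℂ)
    (v₁ v₂ : ℂ) (hv₁ : v₁ ≠ 0) (hv₂ : v₂ ≠ 0)
    (W₁ W₂ : Matrix (Fin n) (Fin n) ℂ) :
    blkI (Matrix.fromBlocks (v₁ • (1 : Matrix Unit Unit ℂ)) 0 0 W₁ * M *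
        Matrix.fromBlocks (v₂ • (1 : Matrix Unit Unit ℂ)) 0 0 W₂) =
      Matrix.fromBlocks (v₂⁻¹ • (1 : Matrix Unit Unit ℂ)) 0 0 W₁ * blkI M *
        Matrix.fromBlocks (v₁⁻¹ • (1 : Matrix Unit Unit ℂ)) 0 0 W₂ := by
  have h₁ : v₁ * (v₂ * v₁)⁻¹ = v₂⁻¹ := by field_simp
  have h₂ : (v₂ * v₁)⁻¹ * v₂ = v₁⁻¹ := by field_simp
  rw [← fromBlocks_toBlocks M, blkI_fromBlocks,
    fromBlocks_diag_mul_fromBlocks_mul_fromBlocks_diag, blkI_fromBlocks,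
    fromBlocks_diag_mul_fromBlocks_mul_fromBlocks_diag]
  simp only [Matrix.smul_mul, Matrix.mul_smul, Matrix.one_mul, Matrix.mul_one, smul_smul,
    inv_smul₀, h₁, h₂, mul_inv_cancel₀ hv₁, one_smul, Matrix.neg_mul, smul_neg,
    Matrix.mul_sub, Matrix.sub_mul, Matrix.mul_assoc]
  rw [_root_.mul_inv_rev]

/-- Commutation of the block involution `𝓘` with diagonal weights:
`𝓘(diag(v₁,W₁) · A · diag(v₂,W₂)) = diag(v₂⁻¹,W₁) · 𝓘(A) · diag(v₁⁻¹,W₂)`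
for nonzero scalars `v₁, v₂` and invertible matrices `W₁, W₂`, whenever the upper-left
block of `A` is invertible. -/
theorem stmt_11 {n : ℕ} (M : Matrix (Unit ⊕ Fin n) (Unit ⊕ Fin n) ℂ)
    (v₁ v₂ : ℂ) (hv₁ : v₁ ≠ 0) (hv₂ : v₂ ≠ 0)
    (W₁ W₂ : Matrix (Fin n) (Fin n) ℂ) (hW₁ : IsUnit W₁) (hW₂ : IsUnit W₂)
    (hM : IsUnit M.toBlocks₁₁) :
    blkI (Matrix.fromBlocks (v₁ • (1 : Matrix Unit Unit ℂ)) 0 0 W₁ * M *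
        Matrix.fromBlocks (v₂ • (1 : Matrix Unit Unit ℂ)) 0 0 W₂) =
      Matrix.fromBlocks (v₂⁻¹ • (1 : Matrix Unit Unit ℂ)) 0 0 W₁ * blkI M *
        Matrix.fromBlocks (v₁⁻¹ • (1 : Matrix Unit Unit ℂ)) 0 0 W₂ :=
  stmt_11_general M v₁ v₂ hv₁ hv₂ W₁ W₂
end

section
/- Let $\mathcal{I}$ be the block involution $\mathcal{I}\begin{bmatrix} a & b \\ c & d \end{bmatrix} = \begin{bmatrix} a^{-1} & -a^{-1}b \\ ca^{-1} & d - ca^{-1}b \end{bmatrix}$ on complex $(1+n)\times(1+n)$ matrices with $a \in \mathbb{C}$. If $A$ is accretive, i.e. $\mathrm{Re}\langle A v, v\rangle \ge \kappa |v|^2$ for all $v \in \mathbb{C}^{1+n}$ and $|A| \le \Lambda$, then $a$ is invertible, $\mathcal{I}(A)$ is well defined, and $\mathcal{I}(A)$ is bounded and accretive with constants depending only on $\kappa$ and $\Lambda$. -/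
open Matrix

/-!
Write `v = (v₁, v₂)` for the splitting `Unit ⊕ Fin n`. If `a` is invertible, every `v` is of the
form `((M u)₁, u₂)`, and then `𝓘(M) v = (u₁, (M u)₂)`: the graph of `𝓘(M)` is the
graph of `M` with the first components of input and output exchanged. This exchange preserves
`|x|² + |y|²` and `Re⟨x, y⟩`, so with `y = 𝓘(M) x`, `w = M u` we get
`|x|² + |y|² = |u|² + |w|² ≤ (1 + Λ²)|u|²` and `Re⟨x, y⟩ = Re⟨u, w⟩ ≥ κ|u|²`. The first gives
accretivity of `𝓘(M)` with constant `κ / (1 + Λ²)`; combined with `Re⟨x, y⟩ ≤ |x||y|` it gives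
`|y| ≤ (1 + Λ²)/κ · |x|`.
-/

open RCLike WithLp
open scoped InnerProductSpace

section Euclidean

variable {𝕜 : Type*} [RCLike 𝕜] {m n : Type*} [Fintype m] [Fintype n]

noncomputable def exchangeFst (u w : EuclideanSpace 𝕜 (m ⊕ n)) : EuclideanSpace 𝕜 (m ⊕ n) :=
  toLp 2 (Sum.elim (fun i => w (Sum.inl i)) (fun j => u (Sum.inr j)))

theorem norm_sq_exchangeFst_add (u w : EuclideanSpace 𝕜 (m ⊕ n)) :
    ‖exchangeFst u w‖ ^ 2 + ‖exchangeFst w u‖ ^ 2 = ‖u‖ ^ 2 + ‖w‖ ^ 2 := by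
  simp only [EuclideanSpace.norm_sq_eq, exchangeFst, Fintype.sum_sum_type,
    Sum.elim_inl, Sum.elim_inr]
  ring

theorem re_inner_exchangeFst (u w : EuclideanSpace 𝕜 (m ⊕ n)) :
    re ⟪exchangeFst u w, exchangeFst w u⟫_𝕜 = re ⟪u, w⟫_𝕜 := by
  simp only [PiLp.inner_apply, exchangeFst, Fintype.sum_sum_type,
    Sum.elim_inl, Sum.elim_inr, map_add, map_sum]
  congr 1
  exact Finset.sum_congr rfl fun i _ => inner_re_symm _ _

variable [DecidableEq m] [DecidableEq n]

theorem exists_exchangeFst_eq {A : Matrix m m 𝕜} (hA : IsUnit A) (B : Matrix m n 𝕜)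
    (C : Matrix n m 𝕜) (D : Matrix n n 𝕜) (v : EuclideanSpace 𝕜 (m ⊕ n)) :
    ∃ u, exchangeFst u (toEuclideanCLM (𝕜 := 𝕜) (fromBlocks A B C D) u) = v := by
  refine ⟨toLp 2 (Sum.elim (A⁻¹ *ᵥ (ofLp v ∘ Sum.inl - B *ᵥ (ofLp v ∘ Sum.inr)))
    (ofLp v ∘ Sum.inr)), ?_⟩
  have hAA : A * A⁻¹ = 1 := A.mul_nonsing_inv ((isUnit_iff_isUnit_det A).mp hA)
  ext (i | j)
  · simp [exchangeFst, fromBlocks_mulVec, mulVec_mulVec, hAA]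
  · simp [exchangeFst]

theorem toEuclideanCLM_fromBlocks_inv_exchangeFst {A : Matrix m m 𝕜} (hA : IsUnit A)
    (B : Matrix m n 𝕜) (C : Matrix n m 𝕜) (D : Matrix n n 𝕜) (u : EuclideanSpace 𝕜 (m ⊕ n)) :
    toEuclideanCLM (𝕜 := 𝕜) (fromBlocks A⁻¹ (-(A⁻¹ * B)) (C * A⁻¹) (D - C * A⁻¹ * B))
        (exchangeFst u (toEuclideanCLM (𝕜 := 𝕜) (fromBlocks A B C D) u)) =
      exchangeFst (toEuclideanCLM (𝕜 := 𝕜) (fromBlocks A B C D) u) u := by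
  have hAA : A⁻¹ * A = 1 := A.nonsing_inv_mul ((isUnit_iff_isUnit_det A).mp hA)
  ext (i | j)
  all_goals
    simp only [exchangeFst, ofLp_toEuclideanCLM, ofLp_toLp, fromBlocks_mulVec, ← Function.comp_def,
      Sum.elim_comp_inl, Sum.elim_comp_inr]
    simp [mulVec_add, mulVec_mulVec, Matrix.mul_assoc, hAA, sub_mulVec, neg_mulVec]

end Euclidean

section Exchange

variable {𝕜 E : Type*} [RCLike 𝕜] [NormedAddCommGroup E] [InnerProductSpace 𝕜 E]

theorem re_inner_ge_of_exchange {x y u w : E} {κ Λ : ℝ} (hκ : 0 ≤ κ)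
    (hnorm : ‖x‖ ^ 2 + ‖y‖ ^ 2 = ‖u‖ ^ 2 + ‖w‖ ^ 2) (hinner : re ⟪x, y⟫_𝕜 = re ⟪u, w⟫_𝕜)
    (hw : ‖w‖ ^ 2 ≤ Λ ^ 2 * ‖u‖ ^ 2) (hacc : κ * ‖u‖ ^ 2 ≤ re ⟪u, w⟫_𝕜) :
    κ / (1 + Λ ^ 2) * ‖x‖ ^ 2 ≤ re ⟪x, y⟫_𝕜 := by
  calc κ / (1 + Λ ^ 2) * ‖x‖ ^ 2
      ≤ κ / (1 + Λ ^ 2) * ((1 + Λ ^ 2) * ‖u‖ ^ 2) := by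
        gcongr
        nlinarith [sq_nonneg ‖y‖]
    _ = κ * ‖u‖ ^ 2 := by field_simp
    _ ≤ re ⟪x, y⟫_𝕜 := hinner ▸ hacc

theorem norm_le_of_exchange {x y u w : E} {κ Λ : ℝ} (hκ : 0 < κ)
    (hnorm : ‖x‖ ^ 2 + ‖y‖ ^ 2 = ‖u‖ ^ 2 + ‖w‖ ^ 2) (hinner : re ⟪x, y⟫_𝕜 = re ⟪u, w⟫_𝕜)
    (hw : ‖w‖ ^ 2 ≤ Λ ^ 2 * ‖u‖ ^ 2) (hacc : κ * ‖u‖ ^ 2 ≤ re ⟪u, w⟫_𝕜) :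
    ‖y‖ ≤ (1 + Λ ^ 2) / κ * ‖x‖ := by
  have key : κ * ‖y‖ ^ 2 ≤ (1 + Λ ^ 2) * (‖x‖ * ‖y‖) := calc
    κ * ‖y‖ ^ 2 ≤ (1 + Λ ^ 2) * (κ * ‖u‖ ^ 2) := by nlinarith [sq_nonneg ‖x‖]
    _ ≤ (1 + Λ ^ 2) * re ⟪x, y⟫_𝕜 := by gcongr; exact hinner ▸ hacc
    _ ≤ (1 + Λ ^ 2) * (‖x‖ * ‖y‖) := by gcongr; exact re_inner_le_norm x y
  rcases (norm_nonneg y).eq_or_lt with hy | hy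
  · rw [← hy]; positivity
  · rw [div_mul_eq_mul_div, le_div_iff₀ hκ]
    nlinarith

end Exchange

namespace Matrix

variable {𝕜 : Type*} [RCLike 𝕜] {ι m n : Type*} [Fintype ι] [DecidableEq ι]

def IsAccretive (κ : ℝ) (M : Matrix ι ι 𝕜) : Prop :=
  ∀ x : EuclideanSpace 𝕜 ι, κ * ‖x‖ ^ 2 ≤ re ⟪x, toEuclideanCLM (𝕜 := 𝕜) M x⟫_𝕜

theorem isAccretive_iff_dotProduct {κ : ℝ} {M : Matrix ι ι 𝕜} :
    M.IsAccretive κ ↔ ∀ v : ι → 𝕜, κ * re (star v ⬝ᵥ v) ≤ re (star v ⬝ᵥ M *ᵥ v) := by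
  have hinner (v w : ι → 𝕜) : ⟪toLp 2 v, toLp 2 w⟫_𝕜 = star v ⬝ᵥ w := by
    rw [EuclideanSpace.inner_toLp_toLp, dotProduct_comm]
  refine ((WithLp.equiv 2 (ι → 𝕜)).symm.forall_congr fun {v} => ?_).symm
  simp only [WithLp.equiv_symm_apply, toEuclideanCLM_toLp, ← hinner, inner_self_eq_norm_sq]

theorem IsAccretive.isUnit {κ : ℝ} {A : Matrix ι ι 𝕜} (h : A.IsAccretive κ) (hκ : 0 < κ) :
    IsUnit A := by
  rw [isUnit_iff_isUnit_det, isUnit_iff_ne_zero]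
  intro hdet
  obtain ⟨v, hv, hAv⟩ := exists_mulVec_eq_zero_iff.mpr hdet
  have := h (toLp 2 v)
  rw [toEuclideanCLM_toLp, hAv, toLp_zero, inner_zero_right, map_zero] at this
  have : ‖toLp 2 v‖ ^ 2 ≤ 0 := nonpos_of_mul_nonpos_right this hκ
  exact hv (by simpa using this)

theorem IsAccretive.toBlocks₁₁ [Fintype m] [Fintype n] [DecidableEq m] [DecidableEq n]
    {κ : ℝ} {M : Matrix (m ⊕ n) (m ⊕ n) 𝕜} (h : M.IsAccretive κ) :
    M.toBlocks₁₁.IsAccretive κ := by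
  rw [isAccretive_iff_dotProduct] at h ⊢
  intro x
  have := h (Sum.elim x 0)
  rw [← fromBlocks_toBlocks M, fromBlocks_mulVec] at this
  simpa [Function.star_sumElim, sumElim_dotProduct_sumElim] using this

end Matrix

theorem exists_exchangeFst_blkI {n : ℕ} {M : Matrix (Unit ⊕ Fin n) (Unit ⊕ Fin n) ℂ}
    (hA : IsUnit M.toBlocks₁₁) (v : EuclideanSpace ℂ (Unit ⊕ Fin n)) :
    ∃ u, v = exchangeFst u (toEuclideanCLM (𝕜 := ℂ) M u) ∧
      toEuclideanCLM (𝕜 := ℂ) (blkI M) v = exchangeFst (toEuclideanCLM (𝕜 := ℂ) M u) u := by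
  obtain ⟨u, hu⟩ := exists_exchangeFst_eq hA M.toBlocks₁₂ M.toBlocks₂₁ M.toBlocks₂₂ v
  have hI := toEuclideanCLM_fromBlocks_inv_exchangeFst hA M.toBlocks₁₂ M.toBlocks₂₁ M.toBlocks₂₂ u
  rw [fromBlocks_toBlocks] at hu hI
  exact ⟨u, hu.symm, hu ▸ hI⟩

/-- If `M` is bounded by `Λ` and accretive with constant `κ > 0`, then its
upper-left block is invertible, `𝓘(M)` is well defined, and `𝓘(M)` is bounded and accretive
with constants depending only on `κ` and `Λ`. -/
theorem stmt_12 {n : ℕ} (κ Λ : ℝ) (hκ : 0 < κ) :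
    ∃ Λ' κ' : ℝ, 0 < κ' ∧
      ∀ M : Matrix (Unit ⊕ Fin n) (Unit ⊕ Fin n) ℂ,
        ‖Matrix.toEuclideanCLM (𝕜 := ℂ) M‖ ≤ Λ →
        (∀ v : Unit ⊕ Fin n → ℂ, κ * (star v ⬝ᵥ v).re ≤ (star v ⬝ᵥ M.mulVec v).re) →
        IsUnit M.toBlocks₁₁ ∧
        ‖Matrix.toEuclideanCLM (𝕜 := ℂ) (blkI M)‖ ≤ Λ' ∧
        ∀ v : Unit ⊕ Fin n → ℂ,
          κ' * (star v ⬝ᵥ v).re ≤ (star v ⬝ᵥ (blkI M).mulVec v).re := by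
  refine ⟨(1 + Λ ^ 2) / κ, κ / (1 + Λ ^ 2), by positivity, fun M hM hacc => ?_⟩
  replace hacc : M.IsAccretive κ := isAccretive_iff_dotProduct.mpr hacc
  have hA : IsUnit M.toBlocks₁₁ := hacc.toBlocks₁₁.isUnit hκ
  have hbound (u) : ‖toEuclideanCLM (𝕜 := ℂ) M u‖ ^ 2 ≤ Λ ^ 2 * ‖u‖ ^ 2 := by
    rw [← mul_pow]
    gcongr
    exact (ContinuousLinearMap.le_opNorm _ u).trans (by gcongr)
  refine ⟨hA, ContinuousLinearMap.opNorm_le_bound _ (by positivity) fun v => ?_,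
    isAccretive_iff_dotProduct.mp fun v => ?_⟩
  all_goals
    obtain ⟨u, rfl, hv⟩ := exists_exchangeFst_blkI hA v
    rw [hv]
  · exact norm_le_of_exchange hκ (norm_sq_exchangeFst_add _ _) (re_inner_exchangeFst _ _)
      (hbound u) (hacc u)
  · exact re_inner_ge_of_exchange hκ.le (norm_sq_exchangeFst_add _ _) (re_inner_exchangeFst _ _)
      (hbound u) (hacc u)
end
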